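/- arXiv:1904.00850 — 4 statements merged into one kernel-verified Lean document; each statement's English description precedes it below -/
import Mathlib

section
/- Let L be an RPQ over a finite alphabet A and let x, y be distinct variables. The CRPQ ∃y (x →^L y), with free variable x, is bounded if and only if L_pf is finite; and the CRPQ ∃x (x →^L y), with free variable y, is bounded if and only if L_sf is finite. -/
namespace RPQ

/-- The extended alphabet `A^±`: `Sum.inl a` is the letter `a`, `Sum.inr a` is its inverse. -/
abbrev Lett (A : Type) := A ⊕ A

/-- `OPath E u w v` holds iff there is an oriented path from `u` to `v` with label `w`
in the graph database with edge relation `E`. -/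
inductive OPath {A V : Type} (E : V → A → V → Prop) : V → List (Lett A) → V → Prop
  | nil (v : V) : OPath E v [] v
  | fwd {u v w : V} {a : A} {l : List (Lett A)} :
      E u a v → OPath E v l w → OPath E u (Sum.inl a :: l) w
  | bwd {u v w : V} {a : A} {l : List (Lett A)} :
      E v a u → OPath E v l w → OPath E u (Sum.inr a :: l) w

/-- Lift a language over `A` to the extended alphabet `A^±` (forward letters only). -/
def liftLang {A : Type} (L : Language A) : Language (Lett A) :=
  (fun w => w.map Sum.inl) '' L

/-- A language over `A^±` using only forward letters (an RPQ, rather than a 2RPQ). -/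
def ForwardLang {A : Type} (L : Language (Lett A)) : Prop :=
  ∀ w ∈ L, ∀ x ∈ w, x.isLeft = true

/-- A conjunctive two-way regular path query with free variables indexed by `ι`. -/
structure C2RPQ (A ι : Type) where
  Var : Type
  finVar : Finite Var
  free : ι → Var
  Idx : Type
  finIdx : Finite Idx
  src : Idx → Var
  tgt : Idx → Var
  lang : Idx → Language (Lett A)

attribute [instance] C2RPQ.finVar C2RPQ.finIdx

/-- Evaluation of a C2RPQ on a graph database. -/
def C2RPQ.eval {A ι : Type} (γ : C2RPQ A ι) {V : Type} (E : V → A → V → Prop)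
    (t : ι → V) : Prop :=
  ∃ h : γ.Var → V, (∀ i, h (γ.free i) = t i) ∧
    ∀ j : γ.Idx, ∃ w ∈ γ.lang j, OPath E (h (γ.src j)) w (h (γ.tgt j))

/-- A union of C2RPQs. -/
abbrev UC2RPQ (A ι : Type) := List (C2RPQ A ι)

def UC2RPQ.eval {A ι : Type} (Γ : UC2RPQ A ι) {V : Type} (E : V → A → V → Prop)
    (t : ι → V) : Prop :=
  ∃ γ ∈ Γ, γ.eval E t

/-- All languages of `Γ` are regular. -/
def UC2RPQ.Regular {A ι : Type} (Γ : UC2RPQ A ι) : Prop :=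
  ∀ γ ∈ Γ, ∀ j : γ.Idx, (γ.lang j).IsRegular

/-- `Γ` is a UCRPQ: all its languages use only forward letters. -/
def UC2RPQ.Forward {A ι : Type} (Γ : UC2RPQ A ι) : Prop :=
  ∀ γ ∈ Γ, ∀ j : γ.Idx, ForwardLang (γ.lang j)

/-- A conjunctive query: atoms are labelled by single letters, plus equality atoms. -/
structure CQ (A ι : Type) where
  Var : Type
  finVar : Finite Var
  free : ι → Var
  atoms : Set (Var × A × Var)
  eqs : Set (Var × Var)

attribute [instance] CQ.finVar

def CQ.eval {A ι : Type} (φ : CQ A ι) {V : Type} (E : V → A → V → Prop)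
    (t : ι → V) : Prop :=
  ∃ h : φ.Var → V, (∀ i, h (φ.free i) = t i) ∧
    (∀ x a y, (x, a, y) ∈ φ.atoms → E (h x) a (h y)) ∧
    (∀ x y, (x, y) ∈ φ.eqs → h x = h y)

/-- A union of conjunctive queries. -/
abbrev UCQ (A ι : Type) := List (CQ A ι)

def UCQ.eval {A ι : Type} (Φ : UCQ A ι) {V : Type} (E : V → A → V → Prop)
    (t : ι → V) : Prop :=
  ∃ φ ∈ Φ, φ.eval E t

/-- `Γ` and `Φ` agree on every (finite) graph database. -/
def EquivUCQ {A ι : Type} (Γ : UC2RPQ A ι) (Φ : UCQ A ι) : Prop :=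
  ∀ (V : Type) [Fintype V] (E : V → A → V → Prop) (t : ι → V),
    UC2RPQ.eval Γ E t ↔ UCQ.eval Φ E t

/-- A UC2RPQ is bounded if it is equivalent to some UCQ. -/
def UC2RPQ.Bounded {A ι : Type} (Γ : UC2RPQ A ι) : Prop :=
  ∃ Φ : UCQ A ι, EquivUCQ Γ Φ

/-- Containment of UC2RPQs. -/
def UC2RPQ.Contained {A ι : Type} (Γ Γ' : UC2RPQ A ι) : Prop :=
  ∀ (V : Type) [Fintype V] (E : V → A → V → Prop) (t : ι → V),
    UC2RPQ.eval Γ E t → UC2RPQ.eval Γ' E t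

/-- Equivalence relation on variables generated by the equality atoms. -/
def CQ.eqv {A ι : Type} (φ : CQ A ι) : φ.Var → φ.Var → Prop :=
  Relation.EqvGen fun x y => (x, y) ∈ φ.eqs

/-- Homomorphism between CQs (fixing the free variables pointwise). -/
def CQHom {A ι : Type} (φ ψ : CQ A ι) : Prop :=
  ∃ h : φ.Var → ψ.Var,
    (∀ i, h (φ.free i) = ψ.free i) ∧
    (∀ x y, φ.eqv x y → ψ.eqv (h x) (h y)) ∧
    ∀ x a y, (x, a, y) ∈ φ.atoms →
      ∃ x' y', (x', a, y') ∈ ψ.atoms ∧ ψ.eqv (h x) x' ∧ ψ.eqv (h y) y'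

/-- An expansion of a UC2RPQ `Γ`: a disjunct together with a chosen word for each atom. -/
structure Expansion {A ι : Type} (Γ : UC2RPQ A ι) where
  γ : C2RPQ A ι
  mem : γ ∈ Γ
  word : ∀ j : γ.Idx, List (Lett A)
  word_mem : ∀ j, word j ∈ γ.lang j

namespace Expansion

variable {A ι : Type} {Γ : UC2RPQ A ι}

/-- Variables of the expansion: variables of the disjunct, plus fresh intermediate
variables for each chosen word (a word of length `k` contributes `k - 1` of them). -/
abbrev EVar (e : Expansion Γ) : Type :=
  e.γ.Var ⊕ (Σ j : e.γ.Idx, Fin ((e.word j).length - 1))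

/-- The `p`-th vertex on the fresh oriented path expanding atom `j`. -/
def node (e : Expansion Γ) (j : e.γ.Idx) (p : ℕ) : e.EVar :=
  if hp : p = 0 then Sum.inl (e.γ.src j)
  else if h : p < (e.word j).length then Sum.inr ⟨j, ⟨p - 1, by omega⟩⟩
  else Sum.inl (e.γ.tgt j)

/-- The CQ associated with an expansion. -/
def cq (e : Expansion Γ) : CQ A ι where
  Var := e.EVar
  finVar := inferInstance
  free := fun i => Sum.inl (e.γ.free i)
  atoms := {t | ∃ (j : e.γ.Idx) (p : ℕ) (a : A),
    ((e.word j)[p]? = some (Sum.inl a) ∧ t = (e.node j p, a, e.node j (p + 1))) ∨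
    ((e.word j)[p]? = some (Sum.inr a) ∧ t = (e.node j (p + 1), a, e.node j p))}
  eqs := {t | ∃ j : e.γ.Idx, e.word j = [] ∧
    t = (Sum.inl (e.γ.src j), Sum.inl (e.γ.tgt j))}

/-- The size `‖λ‖` of an expansion: its number of non-equality atoms. -/
noncomputable def size (e : Expansion Γ) : ℕ := e.cq.atoms.ncard

/-- An expansion is minimal if no expansion of strictly smaller size maps into it. -/
def Minimal (e : Expansion Γ) : Prop :=
  ¬ ∃ e' : Expansion Γ, CQHom e'.cq e.cq ∧ e'.size < e.size

end Expansion


/-- The prefix-free sublanguage of `L`: words of `L` with no proper prefix in `L`. -/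
def Lpf {A : Type} (L : Language A) : Language A :=
  {w | w ∈ L ∧ ¬ ∃ v, v ∈ L ∧ v <+: w ∧ v ≠ w}

/-- The suffix-free sublanguage of `L`: words of `L` with no proper suffix in `L`. -/
def Lsf {A : Type} (L : Language A) : Language A :=
  {w | w ∈ L ∧ ¬ ∃ v, v ∈ L ∧ v <:+ w ∧ v ≠ w}

/-- The query `∃ y (x →^L y)`, whose only free variable is `x`. -/
def existsTgtQ (A : Type) (L : Language A) : C2RPQ A Unit where
  Var := Fin 2
  finVar := inferInstance
  free := fun _ => 0
  Idx := Unit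
  finIdx := inferInstance
  src := fun _ => 0
  tgt := fun _ => 1
  lang := fun _ => liftLang L

/-- The query `∃ x (x →^L y)`, whose only free variable is `y`. -/
def existsSrcQ (A : Type) (L : Language A) : C2RPQ A Unit where
  Var := Fin 2
  finVar := inferInstance
  free := fun _ => 1
  Idx := Unit
  finIdx := inferInstance
  src := fun _ => 0
  tgt := fun _ => 1
  lang := fun _ => liftLang L

/-! If `L_pf` is finite, `∃y (x →^L y)` is equivalent to the union of the path CQs of the words
of `L_pf`, because every word of `L` has a prefix in `L_pf`. Conversely, if it is equivalent to a
UCQ `Φ`, pick `w ∈ L_pf` longer than the total number of variables of `Φ`. On the path graph of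
`w` some CQ of `Φ` holds at the first vertex and misses some vertex `m < |w|`, so it still holds
once the edge leaving `m` is deleted; hence so does the query, which produces a proper prefix of
`w` in `L`. Reversing every edge exchanges the two queries and turns `L_sf` into the mirror image
of `(L.reverse)_pf`, which gives the second equivalence. -/

section Paths

variable {A V : Type} {E : V → A → V → Prop}

inductive FwdPath (E : V → A → V → Prop) : V → List A → V → Prop
  | nil (v : V) : FwdPath E v [] v
  | cons {u v w : V} {a : A} {l : List A} :
      E u a v → FwdPath E v l w → FwdPath E u (a :: l) w

theorem opath_map_inl_iff {u v : V} {w : List A} :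
    OPath E u (w.map Sum.inl) v ↔ FwdPath E u w v := by
  induction w generalizing u with
  | nil => exact ⟨fun h => by cases h; exact .nil _, fun h => by cases h; exact .nil _⟩
  | cons a l ih =>
    constructor
    · intro h
      cases h with
      | fwd e p => exact .cons e (ih.mp p)
    · intro h
      cases h with
      | cons e p => exact .fwd e (ih.mpr p)

theorem fwdPath_append_iff {u x : V} {w₁ w₂ : List A} :
    FwdPath E u (w₁ ++ w₂) x ↔ ∃ v, FwdPath E u w₁ v ∧ FwdPath E v w₂ x := by
  induction w₁ generalizing u with
  | nil => exact ⟨fun h => ⟨u, .nil u, h⟩, fun ⟨_, .nil _, h⟩ => h⟩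
  | cons a l ih =>
    constructor
    · intro h
      cases h with
      | cons e p =>
        obtain ⟨v, p₁, p₂⟩ := ih.mp p
        exact ⟨v, .cons e p₁, p₂⟩
    · rintro ⟨v, h₁, p₂⟩
      cases h₁ with
      | cons e p₁ => exact .cons e (ih.mpr ⟨v, p₁, p₂⟩)

theorem fwdPath_iff_exists_fun {u v : V} {w : List A} :
    FwdPath E u w v ↔ ∃ f : ℕ → V, f 0 = u ∧ f w.length = v ∧
      ∀ i a, w[i]? = some a → E (f i) a (f (i + 1)) := by
  constructor
  · intro h
    induction h with
    | nil x => exact ⟨fun _ => x, rfl, rfl, by simp⟩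
    | @cons x _ _ _ _ e _ ih =>
      obtain ⟨f, hf0, hfl, hfe⟩ := ih
      refine ⟨fun i => if i = 0 then x else f (i - 1), by simp, by simp [hfl], ?_⟩
      rintro (_ | i) b hb
      · simp only [List.getElem?_cons_zero, Option.some.injEq] at hb
        simpa [← hb, hf0] using e
      · simpa using hfe i b (by simpa using hb)
  · rintro ⟨f, rfl, rfl, hfe⟩
    induction w generalizing f with
    | nil => exact .nil _
    | cons a l ih =>
      exact .cons (hfe 0 a rfl) (ih (fun i => f (i + 1)) fun i b hb => hfe (i + 1) b hb)

def reverseGraph (E : V → A → V → Prop) : V → A → V → Prop := fun u a v => E v a u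

theorem FwdPath.reverse {u v : V} {w : List A} (h : FwdPath E u w v) :
    FwdPath (reverseGraph E) v w.reverse u := by
  induction h with
  | nil v => exact .nil v
  | cons e _ ih =>
    rw [List.reverse_cons, fwdPath_append_iff]
    exact ⟨_, ih, .cons e (.nil _)⟩

theorem fwdPath_reverseGraph_iff {u v : V} {w : List A} :
    FwdPath (reverseGraph E) v w.reverse u ↔ FwdPath E u w v :=
  ⟨fun h => List.reverse_reverse w ▸ (h.reverse : FwdPath E u w.reverse.reverse v),
    FwdPath.reverse⟩

end Paths

section Queries

variable {A V : Type} {E : V → A → V → Prop} {L : Language A}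

theorem exists_mem_liftLang_opath_iff {u v : V} :
    (∃ w ∈ liftLang L, OPath E u w v) ↔ ∃ w ∈ L, FwdPath E u w v := by
  constructor
  · rintro ⟨_, ⟨w, hw, rfl⟩, p⟩
    exact ⟨w, hw, opath_map_inl_iff.mp p⟩
  · rintro ⟨w, hw, p⟩
    exact ⟨_, ⟨w, hw, rfl⟩, opath_map_inl_iff.mpr p⟩

theorem eval_existsTgtQ {t : Unit → V} :
    UC2RPQ.eval [existsTgtQ A L] E t ↔ ∃ v, ∃ w ∈ L, FwdPath E (t ()) w v := by
  simp only [UC2RPQ.eval, C2RPQ.eval, List.mem_singleton, exists_eq_left, existsTgtQ,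
    exists_mem_liftLang_opath_iff, Fin.exists_fin_succ_pi, Fin.cons_zero, Fin.cons_one,
    Unique.forall_iff, PUnit.default_eq_unit, exists_const, exists_and_left, exists_eq_left]

theorem eval_existsSrcQ {t : Unit → V} :
    UC2RPQ.eval [existsSrcQ A L] E t ↔ ∃ u, ∃ w ∈ L, FwdPath E u w (t ()) := by
  simp only [UC2RPQ.eval, C2RPQ.eval, List.mem_singleton, exists_eq_left, existsSrcQ,
    exists_mem_liftLang_opath_iff, Fin.exists_fin_succ_pi, Fin.cons_zero, Fin.cons_one,
    Unique.forall_iff, PUnit.default_eq_unit, exists_const, exists_eq_left]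

theorem eval_existsSrcQ_iff_reverseGraph {t : Unit → V} :
    UC2RPQ.eval [existsSrcQ A L] E t ↔
      UC2RPQ.eval [existsTgtQ A L.reverse] (reverseGraph E) t := by
  rw [eval_existsSrcQ, eval_existsTgtQ]
  constructor
  · rintro ⟨u, w, hw, p⟩
    exact ⟨u, w.reverse, Language.reverse_mem_reverse.mpr hw, p.reverse⟩
  · rintro ⟨u, w, hw, p⟩
    exact ⟨u, w.reverse, hw, fwdPath_reverseGraph_iff.mp (by rwa [List.reverse_reverse])⟩

end Queries

section Reversal

variable {A ι : Type}

def CQ.reverse (φ : CQ A ι) : CQ A ι where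
  Var := φ.Var
  finVar := φ.finVar
  free := φ.free
  atoms := {t | (t.2.2, t.2.1, t.1) ∈ φ.atoms}
  eqs := φ.eqs

theorem CQ.eval_reverse {V : Type} {E : V → A → V → Prop} {φ : CQ A ι} {t : ι → V} :
    φ.reverse.eval E t ↔ φ.eval (reverseGraph E) t :=
  exists_congr fun _ => and_congr_right fun _ => and_congr_left fun _ =>
    ⟨fun H x a y hxy => H y a x hxy, fun H x a y hxy => H y a x hxy⟩

theorem UCQ.eval_map_reverse {V : Type} {E : V → A → V → Prop} {Φ : UCQ A ι} {t : ι → V} :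
    UCQ.eval (Φ.map CQ.reverse) E t ↔ UCQ.eval Φ (reverseGraph E) t := by
  simp only [UCQ.eval, List.mem_map, exists_exists_and_eq_and, CQ.eval_reverse]

theorem UC2RPQ.Bounded.of_eval_iff_reverseGraph {Γ Γ' : UC2RPQ A ι}
    (h : ∀ (V : Type) (E : V → A → V → Prop) (t : ι → V),
      Γ.eval E t ↔ Γ'.eval (reverseGraph E) t)
    (hb : Γ'.Bounded) : Γ.Bounded := by
  obtain ⟨Φ, hΦ⟩ := hb
  exact ⟨Φ.map CQ.reverse, fun V _ E t => by rw [UCQ.eval_map_reverse, h, hΦ]⟩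

theorem bounded_existsSrcQ_iff {L : Language A} :
    UC2RPQ.Bounded [existsSrcQ A L] ↔ UC2RPQ.Bounded [existsTgtQ A L.reverse] :=
  -- `reverseGraph (reverseGraph E)` is `E` by definitional unfolding
  ⟨.of_eval_iff_reverseGraph fun _ E _ =>
      (eval_existsSrcQ_iff_reverseGraph (E := reverseGraph E)).symm,
    .of_eval_iff_reverseGraph fun _ _ _ => eval_existsSrcQ_iff_reverseGraph⟩

theorem Lsf_eq_reverse_Lpf_reverse (L : Language A) : Lsf L = (Lpf L.reverse).reverse := by
  ext w
  change (w ∈ L ∧ _) ↔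
    (w.reverse.reverse ∈ L ∧ ¬∃ v, v.reverse ∈ L ∧ v <+: w.reverse ∧ v ≠ w.reverse)
  conv_rhs => rw [List.reverse_involutive.surjective.exists]
  simp only [List.reverse_reverse, List.reverse_prefix, ne_eq, List.reverse_inj]

theorem finite_Lsf_iff {L : Language A} : (Lsf L).Finite ↔ (Lpf L.reverse).Finite := by
  rw [Lsf_eq_reverse_Lpf_reverse, Language.reverse_eq_image]
  exact Set.finite_image_iff List.reverse_injective.injOn

end Reversal

section Prefix

variable {A V : Type} {L : Language A}

theorem exists_mem_Lpf_prefix {w : List A} (hw : w ∈ L) : ∃ v ∈ Lpf L, v <+: w := by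
  classical
  have hex : ∃ n, w.take n ∈ L := ⟨w.length, by rwa [List.take_length]⟩
  refine ⟨w.take (Nat.find hex), ⟨Nat.find_spec hex, ?_⟩, List.take_prefix _ _⟩
  rintro ⟨v, hv, hvp, hne⟩
  have hvw : v = w.take v.length := List.prefix_iff_eq_take.mp (hvp.trans (List.take_prefix _ _))
  have hlt : v.length < Nat.find hex := by
    refine lt_of_le_of_ne (hvp.length_le.trans (List.length_take_le _ _)) fun h => hne ?_
    rwa [h] at hvw
  exact Nat.find_min hex hlt (hvw ▸ hv)

def pathCQ (w : List A) : CQ A Unit where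
  Var := Fin (w.length + 1)
  finVar := inferInstance
  free := fun _ => 0
  atoms := {t | w[t.1.val]? = some t.2.1 ∧ t.2.2.val = t.1.val + 1}
  eqs := ∅

theorem eval_pathCQ {w : List A} {E : V → A → V → Prop} {t : Unit → V} :
    (pathCQ w).eval E t ↔ ∃ v, FwdPath E (t ()) w v := by
  constructor
  · rintro ⟨h, hfree, hatoms, -⟩
    refine ⟨_, fwdPath_iff_exists_fun.mpr ⟨fun p => h (Fin.clamp p w.length), hfree (), rfl,
      fun i a ha => hatoms _ _ _ ?_⟩⟩
    have hi : i < w.length := (List.getElem?_eq_some_iff.mp ha).1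
    simp only [pathCQ, Fin.clamp, Nat.min_eq_left hi.le, Nat.min_eq_left hi]
    exact ⟨ha, rfl⟩
  · rintro ⟨v, p⟩
    obtain ⟨f, hf0, -, hf⟩ := fwdPath_iff_exists_fun.mp p
    refine ⟨fun i => f i.val, fun _ => hf0, ?_, fun _ _ h => h.elim⟩
    rintro (x : Fin (w.length + 1)) a (y : Fin (w.length + 1)) ⟨ha, hy⟩
    change E (f x) a (f y)
    rw [show (y : ℕ) = x + 1 from hy]
    exact hf x a ha

theorem bounded_existsTgtQ_of_finite (hfin : (Lpf L).Finite) :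
    UC2RPQ.Bounded [existsTgtQ A L] := by
  refine ⟨hfin.toFinset.toList.map pathCQ, fun V _ E t => ?_⟩
  simp only [UCQ.eval, List.mem_map, Finset.mem_toList, eval_existsTgtQ]
  constructor
  · rintro ⟨v, w, hw, p⟩
    obtain ⟨u, hu, w', rfl⟩ := exists_mem_Lpf_prefix hw
    obtain ⟨v', p', -⟩ := fwdPath_append_iff.mp p
    exact ⟨_, ⟨u, hfin.mem_toFinset.mpr hu, rfl⟩, eval_pathCQ.mpr ⟨v', p'⟩⟩
  · rintro ⟨_, ⟨u, hu, rfl⟩, hφ⟩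
    obtain ⟨v, p⟩ := eval_pathCQ.mp hφ
    exact ⟨v, u, (hfin.mem_toFinset.mp hu).1, p⟩

end Prefix

section WordGraph

variable {A : Type}

/-- The path of `w` with the edge leaving vertex `m` cut; `m = |w|` cuts nothing, which gives
the full path graph of `w`. -/
def wordGraph (w : List A) (m : ℕ) : Fin (w.length + 1) → A → Fin (w.length + 1) → Prop :=
  fun i a j => i.val ≠ m ∧ w[i.val]? = some a ∧ j.val = i.val + 1

theorem fwdPath_wordGraph (w : List A) :
    FwdPath (wordGraph w w.length) 0 w (Fin.last w.length) := by
  refine fwdPath_iff_exists_fun.mpr ⟨fun p => Fin.clamp p w.length, rfl, by ext; simp [Fin.clamp],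
    fun i a ha => ?_⟩
  have hi : i < w.length := (List.getElem?_eq_some_iff.mp ha).1
  simp only [wordGraph, Fin.clamp, Nat.min_eq_left hi.le, Nat.min_eq_left hi]
  exact ⟨hi.ne, ha, trivial⟩

theorem FwdPath.prefix_drop_of_wordGraph {w u : List A} {m : ℕ} {i j : Fin (w.length + 1)}
    (h : FwdPath (wordGraph w m) i u j) :
    u <+: w.drop i ∧ (i.val ≤ m → i.val + u.length ≤ m) := by
  induction h with
  | nil => simp
  | @cons x y _ a l e _ ih =>
    obtain ⟨hxm, ha, hy⟩ := e
    obtain ⟨hx, rfl⟩ := List.getElem?_eq_some_iff.mp ha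
    refine ⟨?_, fun hle => ?_⟩
    · rw [List.drop_eq_getElem_cons hx, List.cons_prefix_cons, ← hy]
      exact ⟨rfl, ih.1⟩
    · have := ih.2 (by omega)
      simp only [List.length_cons]
      omega

theorem FwdPath.prefix_of_wordGraph {w u : List A} {m : ℕ} {j : Fin (w.length + 1)}
    (h : FwdPath (wordGraph w m) 0 u j) : u <+: w ∧ u.length ≤ m := by
  simpa using h.prefix_drop_of_wordGraph

/-- A CQ with fewer variables than `|w|` misses some vertex `m < |w|` of the path, hence never
uses the edge leaving `m`. -/
theorem CQ.exists_eval_wordGraph_of_card_lt {ι : Type} {φ : CQ A ι} {w : List A}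
    {t : ι → Fin (w.length + 1)} (hφ : φ.eval (wordGraph w w.length) t)
    (hcard : Nat.card φ.Var < w.length) : ∃ m < w.length, φ.eval (wordGraph w m) t := by
  classical
  have := Fintype.ofFinite φ.Var
  obtain ⟨h, hfree, hatoms, heqs⟩ := hφ
  have hlt : (Finset.univ.image fun x => (h x).val).card < (Finset.range w.length).card := by
    rw [Finset.card_range]
    exact Finset.card_image_le.trans_lt (by rwa [Finset.card_univ, ← Nat.card_eq_fintype_card])
  obtain ⟨m, hm, hmh⟩ := Finset.exists_mem_notMem_of_card_lt_card hlt
  refine ⟨m, Finset.mem_range.mp hm, h, hfree, fun x a y hxy => ?_, heqs⟩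
  obtain ⟨-, ha, hy⟩ := hatoms x a y hxy
  exact ⟨fun hx => hmh (Finset.mem_image.mpr ⟨x, Finset.mem_univ _, hx⟩), ha, hy⟩

end WordGraph

section Bounded

variable {A : Type} {L : Language A}

theorem finite_Lpf_of_bounded [Finite A] (hb : UC2RPQ.Bounded [existsTgtQ A L]) :
    (Lpf L).Finite := by
  obtain ⟨Φ, hΦ⟩ := hb
  by_contra hinf
  obtain ⟨w, hw, hlong⟩ : ∃ w ∈ Lpf L, (Φ.map fun φ => Nat.card φ.Var).sum < w.length := by
    by_contra! h
    exact hinf ((List.finite_length_le A _).subset h)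
  obtain ⟨φ, hφ, hφw⟩ := (hΦ _ (wordGraph w w.length) fun _ => 0).mp
    (eval_existsTgtQ.mpr ⟨_, w, hw.1, fwdPath_wordGraph w⟩)
  obtain ⟨m, hm, hφm⟩ := CQ.exists_eval_wordGraph_of_card_lt hφw
    ((List.le_sum_of_mem (List.mem_map_of_mem hφ)).trans_lt hlong)
  obtain ⟨_, u, hu, p⟩ := eval_existsTgtQ.mp ((hΦ _ (wordGraph w m) fun _ => 0).mpr ⟨φ, hφ, hφm⟩)
  obtain ⟨hpre, hlen⟩ := p.prefix_of_wordGraph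
  exact hw.2 ⟨u, hu, hpre, fun h => by subst h; omega⟩

theorem bounded_existsTgtQ_iff [Finite A] :
    UC2RPQ.Bounded [existsTgtQ A L] ↔ (Lpf L).Finite :=
  ⟨finite_Lpf_of_bounded, bounded_existsTgtQ_of_finite⟩

end Bounded

theorem exists_rpq_bounded_iff_general {A : Type} [Fintype A] (L : Language A) :
    (UC2RPQ.Bounded [existsTgtQ A L] ↔ (Lpf L).Finite) ∧
    (UC2RPQ.Bounded [existsSrcQ A L] ↔ (Lsf L).Finite) := by
  rw [bounded_existsSrcQ_iff, finite_Lsf_iff]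
  exact ⟨bounded_existsTgtQ_iff, bounded_existsTgtQ_iff⟩

/-- The CRPQ `∃y (x →^L y)` is bounded iff `L_pf` is finite, and the
CRPQ `∃x (x →^L y)` is bounded iff `L_sf` is finite. -/
theorem exists_rpq_bounded_iff {A : Type} [Fintype A] (L : Language A)
    (hreg : L.IsRegular) :
    (UC2RPQ.Bounded [existsTgtQ A L] ↔ (Lpf L).Finite) ∧
    (UC2RPQ.Bounded [existsSrcQ A L] ↔ (Lsf L).Finite) :=
  exists_rpq_bounded_iff_general L

end RPQ
end

section
/- There is a polynomial p such that for every language L ⊆ A* accepted by an NFA with n states, each of the languages L_pf, L_sf and L_ff is regular and is accepted by an NFA with at most 2^{p(n)} states. -/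
/-!
`L_pf = L \ L A⁺`, `L_sf = L \ A⁺ L` and `L_ff = L \ (A⁺ L ∪ L A⁺ ∪ (A⁺ L) A⁺)`: a proper factor `v`
of `w = x v y` is a proper suffix of `w` if `y = []`, a proper prefix if `x = []`, and otherwise a
proper suffix of the proper prefix `x v`. If `M` is an NFA with `n` states, `A⁺ L(M)` is accepted by
an NFA with `n + 1` states: a fresh initial state loops on every letter and may also jump into the
initial states of `M`; reversing the automaton gives the same for `L(M) A⁺`. The subset construction
turns these into DFAs with `2 ^ O(n)` states, and complement and products of DFAs yield DFAs, hence
NFAs, for the three languages with at most `2 ^ (4 n + 4)` states.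
-/

namespace RPQ

/-- The factor-free sublanguage of `L`: words of `L` with no proper factor in `L`. -/
def Lff {A : Type} (L : Language A) : Language A :=
  {w | w ∈ L ∧ ¬ ∃ v, v ∈ L ∧ v <:+: w ∧ v ≠ w}

open List

variable {α : Type*}

def withProperPrefixIn (L : Language α) : Language α := {w | ∃ v, v ∈ L ∧ v <+: w ∧ v ≠ w}

def withProperSuffixIn (L : Language α) : Language α := {w | ∃ v, v ∈ L ∧ v <:+ w ∧ v ≠ w}

def withProperFactorIn (L : Language α) : Language α := {w | ∃ v, v ∈ L ∧ v <:+: w ∧ v ≠ w}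

theorem mem_withProperPrefixIn {L : Language α} {w : List α} :
    w ∈ withProperPrefixIn L ↔ ∃ v ∈ L, v <+: w ∧ v ≠ w := Iff.rfl

theorem mem_withProperSuffixIn {L : Language α} {w : List α} :
    w ∈ withProperSuffixIn L ↔ ∃ v ∈ L, v <:+ w ∧ v ≠ w := Iff.rfl

theorem mem_withProperFactorIn {L : Language α} {w : List α} :
    w ∈ withProperFactorIn L ↔ ∃ v ∈ L, v <:+: w ∧ v ≠ w := Iff.rfl

theorem Lpf_eq {A : Type} (L : Language A) : Lpf L = L ⊓ (withProperPrefixIn L)ᶜ := rfl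

theorem Lsf_eq {A : Type} (L : Language A) : Lsf L = L ⊓ (withProperSuffixIn L)ᶜ := rfl

theorem Lff_eq {A : Type} (L : Language A) : Lff L = L ⊓ (withProperFactorIn L)ᶜ := rfl

theorem isSuffix_cons_and_ne_iff {v x : List α} {a : α} :
    v <:+ a :: x ∧ v ≠ a :: x ↔ v <:+ x := by
  refine ⟨fun ⟨h, hne⟩ => (suffix_cons_iff.1 h).resolve_left hne,
    fun h => ⟨h.trans (suffix_cons a x), ?_⟩⟩
  rintro rfl
  simpa using h.length_le

theorem nil_notMem_withProperSuffixIn (L : Language α) : [] ∉ withProperSuffixIn L := by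
  rintro ⟨v, -, hv, hne⟩
  exact hne (suffix_nil.1 hv)

theorem cons_mem_withProperSuffixIn {L : Language α} {a : α} {x : List α} :
    a :: x ∈ withProperSuffixIn L ↔ x ∈ L ∨ x ∈ withProperSuffixIn L := by
  simp only [mem_withProperSuffixIn, isSuffix_cons_and_ne_iff]
  constructor
  · rintro ⟨v, hv, hvx⟩
    by_cases h : v = x
    · exact Or.inl (h ▸ hv)
    · exact Or.inr ⟨v, hv, hvx, h⟩
  · rintro (hx | ⟨v, hv, hvx, -⟩)
    exacts [⟨x, hx, suffix_refl x⟩, ⟨v, hv, hvx⟩]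

theorem withProperPrefixIn_eq_reverse (L : Language α) :
    withProperPrefixIn L = (withProperSuffixIn L.reverse).reverse := by
  ext w
  simp only [mem_withProperPrefixIn, mem_withProperSuffixIn, Language.mem_reverse]
  constructor
  · rintro ⟨v, hv, hvw, hne⟩
    exact ⟨v.reverse, by simpa using hv, reverse_suffix.2 hvw, by simpa using hne⟩
  · rintro ⟨v, hv, hvw, hne⟩
    refine ⟨v.reverse, hv, ?_, ?_⟩
    · simpa using reverse_prefix.2 hvw
    · rintro rfl
      simp at hne

theorem withProperFactorIn_eq (L : Language α) :
    withProperFactorIn L = withProperSuffixIn L + withProperPrefixIn L +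
      withProperPrefixIn (withProperSuffixIn L) := by
  ext w
  simp only [mem_withProperFactorIn, mem_withProperSuffixIn, mem_withProperPrefixIn,
    Language.mem_add]
  constructor
  · rintro ⟨v, hv, ⟨x, y, rfl⟩, hne⟩
    rcases eq_or_ne y [] with rfl | hy
    · exact .inl (.inl ⟨v, hv, ⟨x, by simp⟩, by simpa using hne⟩)
    rcases eq_or_ne x [] with rfl | hx
    · exact .inl (.inr ⟨v, hv, ⟨y, by simp⟩, by simpa using hne⟩)
    exact .inr ⟨x ++ v, ⟨v, hv, suffix_append x v, by simpa⟩, prefix_append _ _, by simpa⟩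
  · rintro ((⟨v, hv, hvw, hne⟩ | ⟨v, hv, hvw, hne⟩) | ⟨u, ⟨v, hv, hvu, -⟩, huw, hne⟩)
    · exact ⟨v, hv, hvw.isInfix, hne⟩
    · exact ⟨v, hv, hvw.isInfix, hne⟩
    refine ⟨v, hv, infix_iff_suffix_prefix.2 ⟨u, hvu, huw⟩, ?_⟩
    rintro rfl
    exact hne (huw.eq_of_length_le hvu.length_le)

variable {σ : Type*}

def padLeft (M : NFA α σ) : NFA α (Option σ) where
  step
    | none, _ => {none} ∪ some '' M.start
    | some s, a => some '' M.step s a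
  start := {none}
  accept := some '' M.accept

theorem padLeft_stepSet_image_some (M : NFA α σ) (S : Set σ) (a : α) :
    (padLeft M).stepSet (some '' S) a = some '' M.stepSet S a := by
  simp only [NFA.stepSet, Set.biUnion_image, Set.image_iUnion₂]
  rfl

theorem padLeft_acceptsFrom_image_some (M : NFA α σ) (S : Set σ) :
    (padLeft M).acceptsFrom (some '' S) = M.acceptsFrom S := by
  ext x
  induction x generalizing S with
  | nil => simp [padLeft]
  | cons a x ih => simp [padLeft_stepSet_image_some, ih]

theorem accepts_padLeft (M : NFA α σ) : (padLeft M).accepts = withProperSuffixIn M.accepts := by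
  ext x
  rw [NFA.accepts_eq_acceptsFrom_start]
  induction x with
  | nil => simp [padLeft, nil_notMem_withProperSuffixIn]
  | cons a x ih =>
    have hstep : (padLeft M).stepSet (padLeft M).start a = {none} ∪ some '' M.start :=
      NFA.stepSet_singleton _ _ _
    rw [NFA.cons_mem_acceptsFrom, cons_mem_withProperSuffixIn, ← ih, hstep,
      NFA.acceptsFrom_union, padLeft_acceptsFrom_image_some, Language.mem_add, or_comm]
    rfl

def padRight (M : NFA α σ) : NFA α (Option σ) := (padLeft M.reverse).reverse

theorem accepts_padRight (M : NFA α σ) :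
    (padRight M).accepts = withProperPrefixIn M.accepts := by
  have hrev : M.reverse.accepts = M.accepts.reverse := Set.ext fun _ => NFA.mem_accepts_reverse
  ext x
  simp [padRight, withProperPrefixIn_eq_reverse, Language.mem_reverse, accepts_padLeft, hrev]

theorem isRegular_and_exists_nfa_of_dfa {A τ : Type} [Fintype τ] {L : Language A}
    (D : DFA A τ) (hD : D.accepts = L) {N : ℕ} (hN : Fintype.card τ ≤ N) :
    L.IsRegular ∧ ∃ (σ' : Type) (_ : Fintype σ') (M' : NFA A σ'),
      M'.accepts = L ∧ Fintype.card σ' ≤ N :=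
  ⟨⟨τ, inferInstance, D, hD⟩, τ, inferInstance, D.toNFA, by rw [DFA.toNFA_correct, hD], hN⟩

/-- There is a polynomial `p` such that whenever `L` is accepted by an
NFA with `n` states, each of `L_pf`, `L_sf`, `L_ff` is regular, being accepted by an NFA
with at most `2 ^ p(n)` states. -/
theorem pf_sf_ff_regular_exponential_nfa :
    ∃ p : Polynomial ℕ,
      ∀ (A σ : Type) [Fintype A] [Fintype σ] (M : NFA A σ),
        ((Lpf M.accepts).IsRegular ∧
          ∃ (σ' : Type) (_ : Fintype σ') (M' : NFA A σ'),
            M'.accepts = Lpf M.accepts ∧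
            Fintype.card σ' ≤ 2 ^ p.eval (Fintype.card σ)) ∧
        ((Lsf M.accepts).IsRegular ∧
          ∃ (σ' : Type) (_ : Fintype σ') (M' : NFA A σ'),
            M'.accepts = Lsf M.accepts ∧
            Fintype.card σ' ≤ 2 ^ p.eval (Fintype.card σ)) ∧
        ((Lff M.accepts).IsRegular ∧
          ∃ (σ' : Type) (_ : Fintype σ') (M' : NFA A σ'),
            M'.accepts = Lff M.accepts ∧
            Fintype.card σ' ≤ 2 ^ p.eval (Fintype.card σ)) := by
  refine ⟨4 * .X + 4, fun A σ _ _ M => ?_⟩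
  have hp : (4 * .X + 4 : Polynomial ℕ).eval (Fintype.card σ) = 4 * Fintype.card σ + 4 := by
    simp
  rw [hp]
  refine ⟨isRegular_and_exists_nfa_of_dfa (M.toDFA.inter (padRight M).toDFAᶜ) ?_ ?_,
    isRegular_and_exists_nfa_of_dfa (M.toDFA.inter (padLeft M).toDFAᶜ) ?_ ?_,
    isRegular_and_exists_nfa_of_dfa (M.toDFA.inter (((padLeft M).toDFA.union
      (padRight M).toDFA).union (padRight (padLeft M)).toDFA)ᶜ) ?_ ?_⟩
  · simp [Lpf_eq, accepts_padRight]
  · simp only [Fintype.card_prod, Fintype.card_set, Fintype.card_option, ← pow_add]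
    exact Nat.pow_le_pow_right two_pos (by omega)
  · simp [Lsf_eq, accepts_padLeft]
  · simp only [Fintype.card_prod, Fintype.card_set, Fintype.card_option, ← pow_add]
    exact Nat.pow_le_pow_right two_pos (by omega)
  · simp [Lff_eq, withProperFactorIn_eq, accepts_padLeft, accepts_padRight]
  · simp only [Fintype.card_prod, Fintype.card_set, Fintype.card_option, ← pow_add]
    exact Nat.pow_le_pow_right two_pos (by omega)

end RPQ
end

section
/- For every 2DA A with state set Q there exists an ADA^ε B over the same alphabet, with a number of states polynomial in |Q|, accepting exactly the same language as A, such that for every word w: cost_B(w) ≤ cost_A(w) ≤ 3·k^{k·cost_B(w)}, where k = |Q|² + |Q|. Consequently, A is limited if and only if B is limited. -/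
namespace DistAut

/-- A transition of an alternating two-way distance automaton: source state, label
(`none` is an ε-transition, `Sum.inl a` reads `a` moving rightwards, `Sum.inr a` reads
`a⁻¹` moving leftwards), end flag, cost (`true` = cost 1), and target state. -/
structure ATrans (A Q : Type) where
  src : Q
  lab : Option (A ⊕ A)
  endFlag : Bool
  cost : Bool
  tgt : Q

/-- An alternating two-way distance automaton with ε-transitions (A2DA^ε).
States are partitioned into existential states and universal states; the initial state is
existential and all final states are existential. -/
structure A2DA (A Q : Type) where
  existential : Set Q
  init : Q
  final : Set Q
  trans : Set (ATrans A Q)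
  init_mem : init ∈ existential
  final_sub : final ⊆ existential

namespace A2DA

variable {A Q : Type}

/-- The transition `tr` can be applied on word `w` at head position `i`, moving the head
to position `i'` (head positions range over `{0, …, |w|}`; the end flag must record
whether `i'` is an end position). -/
def Applies (M : A2DA A Q) (w : List A) (i : ℕ) (tr : ATrans A Q) (i' : ℕ) : Prop :=
  tr ∈ M.trans ∧
  (tr.endFlag = true ↔ (i' = 0 ∨ i' = w.length)) ∧
  match tr.lab with
  | none => i' = i
  | some (Sum.inl a) => w[i]? = some a ∧ i' = i + 1
  | some (Sum.inr a) => i ≠ 0 ∧ w[i - 1]? = some a ∧ i' = i - 1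

/-- `Acc M w q i n` holds iff there is an accepting run (a finite tree of configurations)
of `M` on `w` from configuration `(q, i)` whose cost (the maximum over branches of the
sum of transition costs) is at most `n`.  A node in an existential configuration has at
most one child, a node in a universal configuration has a child for every applicable
transition (and at least one), and leaves carry final states. -/
inductive Acc (M : A2DA A Q) (w : List A) : Q → ℕ → ℕ → Prop
  | leaf {q : Q} {i n : ℕ} : q ∈ M.final → Acc M w q i n
  | step {q : Q} {i n : ℕ} (tr : ATrans A Q) (i' : ℕ) :
      q ∈ M.existential → tr.src = q → M.Applies w i tr i' →
      Acc M w tr.tgt i' n → Acc M w q i (cond tr.cost 1 0 + n)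
  | split {q : Q} {i n : ℕ} (f : ATrans A Q → ℕ → ℕ) :
      q ∉ M.existential →
      (∃ tr i', tr.src = q ∧ M.Applies w i tr i') →
      (∀ tr i', tr.src = q → M.Applies w i tr i' → Acc M w tr.tgt i' (f tr i')) →
      (∀ tr i', tr.src = q → M.Applies w i tr i' → cond tr.cost 1 0 + f tr i' ≤ n) →
      Acc M w q i n

/-- The cost of `w`: the least cost of an accepting run of `M` on `w` from the initial
configuration `(q₀, 0)` (and `0` if there is no accepting run). -/
noncomputable def cost (M : A2DA A Q) (w : List A) : ℕ :=
  sInf {n | Acc M w M.init 0 n}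

/-- The language accepted by `M`. -/
def accepts (M : A2DA A Q) : Language A := {w | ∃ n, Acc M w M.init 0 n}

/-- `M` is limited if the costs of all words are uniformly bounded. -/
def Limited (M : A2DA A Q) : Prop := ∃ N, ∀ w : List A, M.cost w ≤ N

/-- No ε-transitions. -/
def EpsFree (M : A2DA A Q) : Prop := ∀ tr ∈ M.trans, tr.lab ≠ none

/-- No leftward-moving transitions (a one-way automaton). -/
def OneWay (M : A2DA A Q) : Prop := ∀ tr ∈ M.trans, ∀ a : A, tr.lab ≠ some (Sum.inr a)

/-- No universal states (a non-alternating automaton). -/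
def NonAlternating (M : A2DA A Q) : Prop := ∀ q : Q, q ∈ M.existential

end A2DA

/-- A transition of a (one-way) distance automaton. -/
structure DTrans (A Q : Type) where
  src : Q
  lab : A
  cost : Bool
  tgt : Q

/-- A distance automaton (DA): an NFA with costly (`cost = true`) and non-costly
transitions. -/
structure DA (A Q : Type) where
  init : Q
  final : Set Q
  trans : Set (DTrans A Q)

namespace DA

variable {A Q : Type}

/-- `Run M q w n` holds iff there is an accepting run of `M` from state `q` reading the
whole word `w`, ending in a final state, of cost exactly `n`. -/
inductive Run (M : DA A Q) : Q → List A → ℕ → Prop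
  | nil {q : Q} : q ∈ M.final → Run M q [] 0
  | cons {q : Q} {w : List A} {n : ℕ} (tr : DTrans A Q) :
      tr ∈ M.trans → tr.src = q → Run M tr.tgt w n →
      Run M q (tr.lab :: w) (cond tr.cost 1 0 + n)

/-- The cost of `w`: the minimum cost of an accepting run on `w` (`0` if none exists). -/
noncomputable def cost (M : DA A Q) (w : List A) : ℕ := sInf {n | Run M M.init w n}

/-- The language accepted by `M`. -/
def accepts (M : DA A Q) : Language A := {w | ∃ n, Run M M.init w n}

/-- `M` is limited if the costs of all words are uniformly bounded. -/
def Limited (M : DA A Q) : Prop := ∃ N, ∀ w : List A, M.cost w ≤ N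

end DA

/-!
An accepting run of a non-alternating ε-free two-way automaton from `(p, i)` that never moves
left of `i` is built from excursions (paths back to `(q, i)` that never move left of `i`) and
right moves that never return; an excursion is in turn built from arches (a right move, an
excursion one cell further right, and a left move back) and concatenations.  The one-way
automaton reads the word once and, at each position, proves claims `free p q` (an excursion of
cost `0`), `excursion p q` and `run p`, splitting concatenations universally.  Splitting off a free
half costs nothing, and any other split charges one unit, paid for by the positive cost of the
half it separates off; so a run of cost `c` yields a proof of cost at most `c`.  Conversely each
unit of budget at most triples the cost a proof can witness, so a proof of cost `n` yields a run
of cost below `2 * 3 ^ n`.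
-/

namespace A2DA

variable {A Q : Type}

inductive Excursion (M : A2DA A Q) (w : List A) : ℕ → Q → Q → ℕ → Prop
  | nil (i : ℕ) (p : Q) : Excursion M w i p p 0
  | arch {i c : ℕ} (t₁ t₂ : ATrans A Q) :
      M.Applies w i t₁ (i + 1) → Excursion M w (i + 1) t₁.tgt t₂.src c →
      M.Applies w (i + 1) t₂ i →
      Excursion M w i t₁.src t₂.tgt (cond t₁.cost 1 0 + c + cond t₂.cost 1 0)
  | append {i c₁ c₂ : ℕ} {p q r : Q} :
      Excursion M w i p q c₁ → Excursion M w i q r c₂ → Excursion M w i p r (c₁ + c₂)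

inductive RunAbove (M : A2DA A Q) (w : List A) : ℕ → Q → ℕ → Prop
  | final {i : ℕ} {p : Q} : p ∈ M.final → RunAbove M w i p 0
  | up {i c : ℕ} (t : ATrans A Q) :
      M.Applies w i t (i + 1) → RunAbove M w (i + 1) t.tgt c →
      RunAbove M w i t.src (cond t.cost 1 0 + c)
  | append {i c₁ c₂ : ℕ} {p q : Q} :
      Excursion M w i p q c₁ → RunAbove M w i q c₂ → RunAbove M w i p (c₁ + c₂)

/-- Accepting paths of `M` from `(p, i)`, cut at their first visits to the positions
`i - 1, i - 2, …` they reach. -/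
inductive RunFrom (M : A2DA A Q) (w : List A) : ℕ → Q → ℕ → Prop
  | above {i c : ℕ} {p : Q} : RunAbove M w i p c → RunFrom M w i p c
  | down {i c₁ c₂ : ℕ} {p : Q} (t : ATrans A Q) :
      Excursion M w (i + 1) p t.src c₁ → M.Applies w (i + 1) t i → RunFrom M w i t.tgt c₂ →
      RunFrom M w (i + 1) p (c₁ + cond t.cost 1 0 + c₂)

variable {M : A2DA A Q} {w : List A}

theorem Acc.mono {q : Q} {i m : ℕ} (h : M.Acc w q i m) {n : ℕ} (hmn : m ≤ n) :
    M.Acc w q i n := by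
  induction h generalizing n with
  | leaf hf => exact .leaf hf
  | step tr i' hex hsrc happ _ ih =>
      obtain ⟨k, rfl⟩ := Nat.exists_eq_add_of_le hmn
      simpa only [Nat.add_assoc] using Acc.step tr i' hex hsrc happ (ih (Nat.le_add_right _ k))
  | split f hq hex _ hbound ih =>
      exact .split f hq hex (fun tr i' hsrc happ => ih tr i' hsrc happ le_rfl)
        (fun tr i' hsrc happ => (hbound tr i' hsrc happ).trans hmn)

theorem Acc.universal {q : Q} {i n : ℕ} (hq : q ∉ M.existential)
    (hex : ∃ tr i', tr.src = q ∧ M.Applies w i tr i')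
    (h : ∀ tr i', tr.src = q → M.Applies w i tr i' →
      ∃ m, cond tr.cost 1 0 + m ≤ n ∧ M.Acc w tr.tgt i' m) :
    M.Acc w q i n := by
  refine .split (fun tr _ => n - cond tr.cost 1 0) hq hex
    (fun tr i' hsrc happ => ?_) (fun tr i' hsrc happ => ?_) <;>
    obtain ⟨m, hm, hacc⟩ := h tr i' hsrc happ
  · exact hacc.mono (by omega)
  · omega

theorem applies_succ_iff {i : ℕ} {t : ATrans A Q} :
    M.Applies w i t (i + 1) ↔ t ∈ M.trans ∧ (t.endFlag = true ↔ i + 1 = w.length) ∧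
      ∃ a, t.lab = some (.inl a) ∧ w[i]? = some a := by
  unfold Applies
  rcases t.lab with _ | a | a
  · simp
  · simp
  · simp; omega

theorem applies_pred_iff {i : ℕ} {t : ATrans A Q} :
    M.Applies w (i + 1) t i ↔ t ∈ M.trans ∧ (t.endFlag = true ↔ i = 0) ∧
      ∃ a, t.lab = some (.inr a) ∧ w[i]? = some a := by
  unfold Applies
  rcases t.lab with _ | a | a
  · simp
  · simp; omega
  · have hlen : w[i]? = some a → i < w.length :=
      fun ha => (List.getElem?_eq_some_iff.mp ha).1
    simp only [Nat.add_sub_cancel, Option.some.injEq, Sum.inr.injEq, exists_eq_left']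
    constructor
    · rintro ⟨hmem, hflag, -, ha, -⟩
      exact ⟨hmem, by have := hlen ha; rw [hflag]; omega, ha⟩
    · rintro ⟨hmem, hflag, ha⟩
      exact ⟨hmem, by have := hlen ha; rw [hflag]; omega, by omega, ha, trivial⟩

theorem applies_self_iff {i i' : ℕ} {t : ATrans A Q} (hl : t.lab = none) :
    M.Applies w i t i' ↔ t ∈ M.trans ∧ (t.endFlag = true ↔ i = 0 ∨ i = w.length) ∧ i' = i := by
  simp only [Applies, hl]
  constructor <;> rintro ⟨hmem, hflag, rfl⟩ <;> exact ⟨hmem, hflag, rfl⟩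

theorem applies_self {i : ℕ} {t : ATrans A Q} (ht : t ∈ M.trans) (hl : t.lab = none)
    (he : t.endFlag = decide (i = 0 ∨ i = w.length)) : M.Applies w i t i :=
  (applies_self_iff hl).2 ⟨ht, by simp [he], rfl⟩

theorem Applies.succ_or_pred (hE : M.EpsFree) {i i' : ℕ} {t : ATrans A Q}
    (h : M.Applies w i t i') : i' = i + 1 ∨ i = i' + 1 := by
  obtain ⟨hmem, -, hlab⟩ := h
  rcases hl : t.lab with _ | a | a <;> rw [hl] at hlab
  · exact absurd hl (hE t hmem)
  · exact .inl hlab.2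
  · omega

theorem cost_le_of_acc {Q' : Type} {N : A2DA A Q'} (g : ℕ → ℕ)
    (hNM : ∀ n, N.Acc w N.init 0 n → M.Acc w M.init 0 (g n))
    (hMN : ∀ n, M.Acc w M.init 0 n → ∃ m, N.Acc w N.init 0 m) :
    M.cost w ≤ g (N.cost w) := by
  by_cases hN : {n | N.Acc w N.init 0 n}.Nonempty
  · exact Nat.sInf_le (hNM _ (Nat.sInf_mem hN))
  · have hM : {n | M.Acc w M.init 0 n} = ∅ :=
      Set.eq_empty_of_forall_notMem fun n hn => hN (hMN n hn)
    simp [cost, hM]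

theorem Excursion.append_runFrom {i c₁ c₂ : ℕ} {p q : Q} (he : M.Excursion w i p q c₁)
    (hr : M.RunFrom w i q c₂) : M.RunFrom w i p (c₁ + c₂) := by
  cases hr with
  | above hr => exact .above (.append he hr)
  | down t he' ht hr => simpa only [Nat.add_assoc] using RunFrom.down t (he.append he') ht hr

theorem RunFrom.runAbove_zero {p : Q} {c : ℕ} (h : M.RunFrom w 0 p c) : M.RunAbove w 0 p c := by
  cases h with
  | above h => exact h

theorem exists_runFrom_of_acc (hE : M.EpsFree) (hNA : M.NonAlternating) {p : Q} {i n : ℕ}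
    (h : M.Acc w p i n) : ∃ c ≤ n, M.RunFrom w i p c := by
  induction h with
  | leaf hf => exact ⟨0, Nat.zero_le _, .above (.final hf)⟩
  | step tr i' _ hsrc happ _ ih =>
      subst hsrc
      obtain ⟨c, hc, hr⟩ := ih
      rcases happ.succ_or_pred hE with rfl | rfl
      · cases hr with
        | above hr => exact ⟨_, by omega, .above (.up tr happ hr)⟩
        | down t he ht hr =>
            exact ⟨_, by omega, (Excursion.arch tr t happ he ht).append_runFrom hr⟩
      · exact ⟨_, by omega, .down tr (.nil _ _) happ hr⟩
  | split _ hq => exact absurd (hNA _) hq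

theorem Excursion.acc (hNA : M.NonAlternating) {i c n : ℕ} {p q : Q}
    (he : M.Excursion w i p q c) (hq : M.Acc w q i n) : M.Acc w p i (c + n) := by
  induction he generalizing n with
  | nil => simpa using hq
  | arch t₁ t₂ h₁ _ h₂ ih =>
      have := Acc.step t₁ _ (hNA _) rfl h₁ (ih (Acc.step t₂ _ (hNA _) rfl h₂ hq))
      exact this.mono (by omega)
  | append _ _ ih₁ ih₂ => simpa only [Nat.add_assoc] using ih₁ (ih₂ hq)

theorem RunAbove.acc (hNA : M.NonAlternating) {i c : ℕ} {p : Q} (hr : M.RunAbove w i p c) :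
    M.Acc w p i c := by
  induction hr with
  | final hf => exact .leaf hf
  | up t ht _ ih => exact .step t _ (hNA _) rfl ht ih
  | append he _ ih => exact he.acc hNA ih

end A2DA

namespace TwoWayToOneWay

open A2DA

variable {A Q : Type}

inductive Claim (Q : Type) : Type
  | free (p q : Q)
  | excursion (p q : Q)
  | run (p : Q)
  deriving Fintype

inductive State (Q : Type) : Type
  | claim (x : Claim Q)
  | fork (y : Claim Q) (cy : Bool) (z : Claim Q) (cz : Bool)
  deriving Fintype

def Claim.IsFinal (M : A2DA A Q) : Claim Q → Prop
  | .free p q => p = q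
  | .excursion p q => p = q
  | .run p => p ∈ M.final

inductive Splits : Claim Q → Claim Q → Bool → Claim Q → Bool → Prop
  | free (p r q : Q) : Splits (.free p q) (.free p r) false (.free r q) false
  | freeExcursion (p r q : Q) : Splits (.excursion p q) (.free p r) false (.excursion r q) false
  | excursionFree (p r q : Q) : Splits (.excursion p q) (.excursion p r) false (.free r q) false
  | excursionExcursion (p r q : Q) :
      Splits (.excursion p q) (.excursion p r) true (.excursion r q) true
  | freeRun (p r : Q) : Splits (.run p) (.free p r) false (.run r) false
  | excursionRun (p r : Q) : Splits (.run p) (.excursion p r) false (.run r) true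

def IsArch (M : A2DA A Q) (t₁ t₂ : ATrans A Q) (a : A) : Prop :=
  t₁ ∈ M.trans ∧ t₂ ∈ M.trans ∧ t₁.lab = some (.inl a) ∧ t₂.lab = some (.inr a)

/-- The boolean component of a state records whether the head is at position `0`: the end flag
of the left move `t₂` of an arch read at position `i < |w|` says whether `i = 0`. -/
inductive Trans (M : A2DA A Q) : ATrans A (State Q × Bool) → Prop
  | fork {x y z : Claim Q} {cy cz : Bool} (h : Splits x y cy z cz) (b e : Bool) :
      Trans M ⟨(.claim x, b), none, e, false, (.fork y cy z cz, b)⟩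
  | left (y : Claim Q) (cy : Bool) (z : Claim Q) (cz b e : Bool) :
      Trans M ⟨(.fork y cy z cz, b), none, e, cy, (.claim y, b)⟩
  | right (y : Claim Q) (cy : Bool) (z : Claim Q) (cz b e : Bool) :
      Trans M ⟨(.fork y cy z cz, b), none, e, cz, (.claim z, b)⟩
  | free {t₁ t₂ : ATrans A Q} {a : A} (h : IsArch M t₁ t₂ a)
      (h₁ : t₁.cost = false) (h₂ : t₂.cost = false) :
      Trans M ⟨(.claim (.free t₁.src t₂.tgt), t₂.endFlag), some (.inl a), t₁.endFlag, false,
        (.claim (.free t₁.tgt t₂.src), false)⟩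
  | excursion {t₁ t₂ : ATrans A Q} {a : A} (h : IsArch M t₁ t₂ a) :
      Trans M ⟨(.claim (.excursion t₁.src t₂.tgt), t₂.endFlag), some (.inl a), t₁.endFlag,
        t₁.cost || t₂.cost, (.claim (.excursion t₁.tgt t₂.src), false)⟩
  | run {t : ATrans A Q} {a : A} (h : t ∈ M.trans) (hl : t.lab = some (.inl a)) (b : Bool) :
      Trans M ⟨(.claim (.run t.src), b), some (.inl a), t.endFlag, t.cost,
        (.claim (.run t.tgt), false)⟩

def automaton (M : A2DA A Q) : A2DA A (State Q × Bool) where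
  existential := {s | ∃ x, s.1 = .claim x}
  init := (.claim (.run M.init), true)
  final := {s | ∃ x, s.1 = .claim x ∧ x.IsFinal M}
  trans := {tr | Trans M tr}
  init_mem := ⟨_, rfl⟩
  final_sub := fun _ ⟨x, hx, _⟩ => ⟨x, hx⟩

theorem automaton_oneWay (M : A2DA A Q) : (automaton M).OneWay := by
  rintro tr htr a
  cases htr <;> simp

/-- What a claim asserts about `M` at position `i` when `automaton M` can prove it with budget
`n`.  The bounds `3 ^ n` and `2 * 3 ^ n` absorb one costly split (two halves of budget
`n - 1`) or one reading step (two costly transitions). -/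
def Claim.Holds (M : A2DA A Q) (w : List A) (i n : ℕ) : Claim Q → Prop
  | .free p q => M.Excursion w i p q 0
  | .excursion p q => ∃ c < 3 ^ n, M.Excursion w i p q c
  | .run p => ∃ c < 2 * 3 ^ n, M.RunAbove w i p c

def State.Holds (M : A2DA A Q) (w : List A) (i n : ℕ) : State Q → Prop
  | .claim x => x.Holds M w i n
  | .fork y cy z cz => (∃ m, cond cy 1 0 + m ≤ n ∧ y.Holds M w i m) ∧
      (∃ m, cond cz 1 0 + m ≤ n ∧ z.Holds M w i m)

variable {M : A2DA A Q} {w : List A}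

theorem applies_arch_iff {i : ℕ} {t₁ t₂ : ATrans A Q} :
    M.Applies w i t₁ (i + 1) ∧ M.Applies w (i + 1) t₂ i ↔
      ∃ a, IsArch M t₁ t₂ a ∧ w[i]? = some a ∧
        (t₁.endFlag = true ↔ i + 1 = w.length) ∧ (t₂.endFlag = true ↔ i = 0) := by
  rw [applies_succ_iff, applies_pred_iff]
  constructor
  · rintro ⟨⟨hm₁, he₁, a, hl₁, ha⟩, hm₂, he₂, a', hl₂, ha'⟩
    obtain rfl : a = a' := Option.some_injective _ (ha.symm.trans ha')
    exact ⟨a, ⟨hm₁, hm₂, hl₁, hl₂⟩, ha, he₁, he₂⟩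
  · rintro ⟨a, ⟨hm₁, hm₂, hl₁, hl₂⟩, ha, he₁, he₂⟩
    exact ⟨⟨hm₁, he₁, a, hl₁, ha⟩, hm₂, he₂, a, hl₂, ha⟩

theorem Claim.holds_of_isFinal {x : Claim Q} {i n : ℕ} (h : x.IsFinal M) : x.Holds M w i n := by
  cases x with
  | free p q => obtain rfl : p = q := h; exact .nil i p
  | excursion p q => obtain rfl : p = q := h; exact ⟨0, by positivity, .nil i p⟩
  | run p => exact ⟨0, by positivity, .final h⟩

theorem Splits.holds {x y z : Claim Q} {cy cz : Bool} {i n : ℕ} (h : Splits x y cy z cz)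
    (hf : (State.fork y cy z cz).Holds M w i n) : x.Holds M w i n := by
  obtain ⟨⟨ny, hny, hy⟩, ⟨nz, hnz, hz⟩⟩ := hf
  have hpow {m k : ℕ} (h : m ≤ k) : 3 ^ m ≤ 3 ^ k := Nat.pow_le_pow_right (by norm_num) h
  have hy' := hpow (le_of_add_le_right hny)
  have hz' := hpow (le_of_add_le_right hnz)
  cases h with
  | free => simpa [Claim.Holds] using hy.append hz
  | freeExcursion =>
      obtain ⟨c, hc, hz⟩ := hz
      exact ⟨0 + c, by omega, hy.append hz⟩
  | excursionFree =>
      obtain ⟨c, hc, hy⟩ := hy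
      exact ⟨c + 0, by omega, hy.append hz⟩
  | excursionExcursion =>
      obtain ⟨c₁, hc₁, hy⟩ := hy
      obtain ⟨c₂, hc₂, hz⟩ := hz
      simp only [cond_true] at hny hnz
      obtain ⟨k, rfl⟩ : ∃ k, n = k + 1 := ⟨n - 1, by omega⟩
      have h₁ := hpow (show ny ≤ k by omega)
      have h₂ := hpow (show nz ≤ k by omega)
      exact ⟨c₁ + c₂, by rw [pow_succ]; omega, hy.append hz⟩
  | freeRun =>
      obtain ⟨c, hc, hz⟩ := hz
      exact ⟨0 + c, by omega, .append hy hz⟩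
  | excursionRun =>
      obtain ⟨c₁, hc₁, hy⟩ := hy
      obtain ⟨c₂, hc₂, hz⟩ := hz
      simp only [cond_true] at hnz
      obtain ⟨k, rfl⟩ : ∃ k, n = k + 1 := ⟨n - 1, by omega⟩
      have h₂ := hpow (show nz ≤ k by omega)
      exact ⟨c₁ + c₂, by rw [pow_succ] at hy' ⊢; omega, .append hy hz⟩

theorem cond_add_add_cond_lt {b₁ b₂ : Bool} {c n : ℕ} (h : c < 3 ^ n) :
    cond b₁ 1 0 + c + cond b₂ 1 0 < 3 ^ (cond (b₁ || b₂) 1 0 + n) := by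
  have : 1 ≤ 3 ^ n := Nat.one_le_pow _ _ (by norm_num)
  cases b₁ <;> cases b₂ <;> simp only [Bool.or_false, Bool.or_true, cond_false,
    cond_true, pow_add, pow_one] <;> omega

theorem Trans.holds_src {tr : ATrans A (State Q × Bool)} {i i' n : ℕ} (htr : Trans M tr)
    (hex : tr.src ∈ (automaton M).existential) (happ : (automaton M).Applies w i tr i')
    (hb : tr.src.2 = true ↔ i = 0)
    (ih : (tr.tgt.2 = true ↔ i' = 0) → tr.tgt.1.Holds M w i' n) :
    tr.src.1.Holds M w i (cond tr.cost 1 0 + n) := by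
  cases htr with
  | fork h =>
      obtain ⟨-, -, rfl⟩ := (applies_self_iff rfl).1 happ
      simpa [State.Holds] using h.holds (ih hb)
  | left | right => obtain ⟨_, ⟨⟩⟩ := hex
  | @free t₁ t₂ a h h₁ h₂ =>
      obtain ⟨-, he, ha, rfl⟩ := happ
      obtain ⟨happ₁, happ₂⟩ := applies_arch_iff.2 ⟨a, h, ha, by simpa using he, hb⟩
      simpa [State.Holds, Claim.Holds, h₁, h₂] using
        Excursion.arch t₁ t₂ happ₁ (ih (by simp)) happ₂
  | @excursion t₁ t₂ a h =>
      obtain ⟨-, he, ha, rfl⟩ := happ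
      obtain ⟨happ₁, happ₂⟩ := applies_arch_iff.2 ⟨a, h, ha, by simpa using he, hb⟩
      obtain ⟨c, hc, hin⟩ := ih (by simp)
      exact ⟨_, cond_add_add_cond_lt hc, .arch t₁ t₂ happ₁ hin happ₂⟩
  | @run t a hmem hl =>
      obtain ⟨-, he, ha, rfl⟩ := happ
      obtain ⟨c, hc, hin⟩ := ih (by simp)
      refine ⟨_, ?_, .up t (applies_succ_iff.2 ⟨hmem, by simpa using he, a, hl, ha⟩) hin⟩
      cases t.cost <;> simp only [cond_false, cond_true, zero_add, pow_add, pow_one] <;> omega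

theorem holds_of_acc {s : State Q × Bool} {i n : ℕ} (h : (automaton M).Acc w s i n)
    (hb : s.2 = true ↔ i = 0) : s.1.Holds M w i n := by
  induction h with
  | leaf hf =>
      obtain ⟨x, hx, hfin⟩ := hf
      rw [hx]
      exact Claim.holds_of_isFinal hfin
  | step tr i' hex hsrc happ _ ih =>
      subst hsrc
      exact Trans.holds_src happ.1 hex happ hb ih
  | @split s i n f hs _ _ hbound ih =>
      obtain ⟨x | ⟨y, cy, z, cz⟩, b⟩ := s
      · exact absurd ⟨x, rfl⟩ hs
      · have side (t : ATrans A (State Q × Bool)) (ht : Trans M t) (hl : t.lab = none)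
            (hsrc : t.src = (.fork y cy z cz, b)) (htgt : t.tgt.2 = b)
            (he : t.endFlag = decide (i = 0 ∨ i = w.length)) :
            ∃ m, cond t.cost 1 0 + m ≤ n ∧ t.tgt.1.Holds M w i m := by
          have happ : (automaton M).Applies w i t i := applies_self ht hl he
          exact ⟨_, hbound t i hsrc happ, ih t i hsrc happ (htgt ▸ hb)⟩
        exact ⟨side _ (.left y cy z cz b _) rfl rfl rfl rfl,
          side _ (.right y cy z cz b _) rfl rfl rfl rfl⟩

theorem acc_of_splits {x y z : Claim Q} {cy cz b : Bool} {i ny nz n : ℕ}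
    (h : Splits x y cy z cz) (hy : (automaton M).Acc w (.claim y, b) i ny)
    (hz : (automaton M).Acc w (.claim z, b) i nz)
    (hny : cond cy 1 0 + ny ≤ n) (hnz : cond cz 1 0 + nz ≤ n) :
    (automaton M).Acc w (.claim x, b) i n := by
  have happ {t : ATrans A (State Q × Bool)} (ht : Trans M t) (hl : t.lab = none)
      (he : t.endFlag = decide (i = 0 ∨ i = w.length)) : (automaton M).Applies w i t i :=
    applies_self ht hl he
  have hfork : (automaton M).Acc w (.fork y cy z cz, b) i n := by
    refine .universal (fun ⟨_, h⟩ => nomatch h)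
      ⟨_, i, rfl, happ (.left y cy z cz b _) rfl rfl⟩ fun t i' hsrc ht => ?_
    obtain ⟨ht, -, hlab⟩ := ht
    cases ht with
    | fork | free | excursion | run => cases hsrc
    | left => cases hsrc; exact ⟨ny, hny, hlab ▸ hy⟩
    | right => cases hsrc; exact ⟨nz, hnz, hlab ▸ hz⟩
  simpa using Acc.step (M := automaton M) _ i ⟨x, rfl⟩ rfl (happ (.fork h b _) rfl rfl) hfork

theorem acc_of_read {x : Claim Q} {b : Bool} {t : ATrans A (State Q × Bool)} {a : A} {i m : ℕ}
    (ht : Trans M t) (hsrc : t.src = (.claim x, b)) (hl : t.lab = some (.inl a))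
    (ha : w[i]? = some a) (he : t.endFlag = true ↔ i + 1 = w.length)
    (hm : (automaton M).Acc w t.tgt (i + 1) m) :
    (automaton M).Acc w (.claim x, b) i (cond t.cost 1 0 + m) :=
  .step t (i + 1) ⟨x, rfl⟩ hsrc (applies_succ_iff.2 ⟨ht, he, a, hl, ha⟩) hm

theorem acc_free_of_excursion {i c : ℕ} {p q : Q} {b : Bool} (h : M.Excursion w i p q c)
    (hc : c = 0) (hb : b = true ↔ i = 0) : (automaton M).Acc w (.claim (.free p q), b) i 0 := by
  induction h generalizing b with
  | nil => exact .leaf ⟨_, rfl, rfl⟩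
  | @arch _ c t₁ t₂ h₁ _ h₂ ih =>
      obtain ⟨a, harch, ha, he₁, he₂⟩ := applies_arch_iff.1 ⟨h₁, h₂⟩
      obtain rfl := Bool.eq_iff_iff.2 (he₂.trans hb.symm)
      obtain ⟨hc₁, rfl, hc₂⟩ : t₁.cost = false ∧ c = 0 ∧ t₂.cost = false := by
        revert hc; cases t₁.cost <;> cases t₂.cost <;> simp
      simpa using acc_of_read (.free harch hc₁ hc₂) rfl rfl ha he₁ (ih rfl (by simp))
  | append _ _ ih₁ ih₂ =>
      exact acc_of_splits (.free _ _ _) (ih₁ (by omega) hb) (ih₂ (by omega) hb) le_rfl le_rfl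

theorem acc_excursion_of_excursion {i c : ℕ} {p q : Q} {b : Bool} (h : M.Excursion w i p q c)
    (hb : b = true ↔ i = 0) : (automaton M).Acc w (.claim (.excursion p q), b) i c := by
  induction h generalizing b with
  | nil => exact .leaf ⟨_, rfl, rfl⟩
  | arch t₁ t₂ h₁ _ h₂ ih =>
      obtain ⟨a, harch, ha, he₁, he₂⟩ := applies_arch_iff.1 ⟨h₁, h₂⟩
      obtain rfl := Bool.eq_iff_iff.2 (he₂.trans hb.symm)
      have hcost : cond (t₁.cost || t₂.cost) 1 0 ≤ cond t₁.cost 1 0 + cond t₂.cost 1 0 := by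
        cases t₁.cost <;> cases t₂.cost <;> decide
      exact (acc_of_read (.excursion harch) rfl rfl ha he₁ (ih (b := false) (by simp))).mono
        (by dsimp only; omega)
  | @append _ c₁ c₂ _ _ _ h₁ h₂ ih₁ ih₂ =>
      by_cases hc₁ : c₁ = 0
      · exact acc_of_splits (.freeExcursion _ _ _) (acc_free_of_excursion h₁ hc₁ hb) (ih₂ hb)
          (Nat.zero_le _) (by simp)
      by_cases hc₂ : c₂ = 0
      · exact acc_of_splits (.excursionFree _ _ _) (ih₁ hb) (acc_free_of_excursion h₂ hc₂ hb)
          (by simp) (Nat.zero_le _)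
      exact acc_of_splits (.excursionExcursion _ _ _) (ih₁ hb) (ih₂ hb)
        (by simp; omega) (by simp; omega)

theorem acc_run_of_runAbove {i c : ℕ} {p : Q} {b : Bool} (h : M.RunAbove w i p c)
    (hb : b = true ↔ i = 0) : (automaton M).Acc w (.claim (.run p), b) i c := by
  induction h generalizing b with
  | final hf => exact .leaf ⟨_, rfl, hf⟩
  | up t ht _ ih =>
      obtain ⟨hmem, he, a, hl, ha⟩ := applies_succ_iff.1 ht
      exact acc_of_read (.run hmem hl b) rfl rfl ha he (ih (by simp))
  | @append _ c₁ c₂ _ _ h₁ _ ih =>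
      by_cases hc₁ : c₁ = 0
      · exact acc_of_splits (.freeRun _ _) (acc_free_of_excursion h₁ hc₁ hb) (ih hb)
          (Nat.zero_le _) (by simp)
      exact acc_of_splits (.excursionRun _ _) (acc_excursion_of_excursion h₁ hb) (ih hb)
        (by simp) (by simp; omega)

theorem acc_automaton_of_acc (hE : M.EpsFree) (hNA : M.NonAlternating) {n : ℕ}
    (h : M.Acc w M.init 0 n) : (automaton M).Acc w (automaton M).init 0 n := by
  obtain ⟨c, hc, hr⟩ := exists_runFrom_of_acc hE hNA h
  exact (acc_run_of_runAbove hr.runAbove_zero (by simp)).mono hc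

theorem acc_of_acc_automaton (hNA : M.NonAlternating) {n : ℕ}
    (h : (automaton M).Acc w (automaton M).init 0 n) : M.Acc w M.init 0 (2 * 3 ^ n) := by
  obtain ⟨c, hc, hr⟩ := holds_of_acc h (by simp [automaton])
  exact (hr.acc hNA).mono hc.le

theorem accepts_automaton (hE : M.EpsFree) (hNA : M.NonAlternating) :
    (automaton M).accepts = M.accepts := by
  ext w
  exact ⟨fun ⟨_, h⟩ => ⟨_, acc_of_acc_automaton hNA h⟩,
    fun ⟨n, h⟩ => ⟨n, acc_automaton_of_acc hE hNA h⟩⟩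

theorem cost_automaton_le (hE : M.EpsFree) (hNA : M.NonAlternating) (w : List A) :
    (automaton M).cost w ≤ M.cost w :=
  cost_le_of_acc id (fun _ => acc_automaton_of_acc hE hNA)
    fun _ h => ⟨_, acc_of_acc_automaton hNA h⟩

theorem cost_le_automaton (hE : M.EpsFree) (hNA : M.NonAlternating) (w : List A) :
    M.cost w ≤ 2 * 3 ^ (automaton M).cost w :=
  cost_le_of_acc _ (fun _ => acc_of_acc_automaton hNA)
    fun n h => ⟨n, acc_automaton_of_acc hE hNA h⟩

def Claim.equivSum : Claim Q ≃ (Q × Q) ⊕ (Q × Q) ⊕ Q where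
  toFun
    | .free p q => .inl (p, q)
    | .excursion p q => .inr (.inl (p, q))
    | .run p => .inr (.inr p)
  invFun
    | .inl (p, q) => .free p q
    | .inr (.inl (p, q)) => .excursion p q
    | .inr (.inr p) => .run p
  left_inv x := by cases x <;> rfl
  right_inv x := by rcases x with ⟨_, _⟩ | ⟨_, _⟩ | _ <;> rfl

def State.equivSum : State Q ≃ Claim Q ⊕ (Claim Q × Bool) × (Claim Q × Bool) where
  toFun
    | .claim x => .inl x
    | .fork y cy z cz => .inr ((y, cy), (z, cz))
  invFun
    | .inl x => .claim x
    | .inr ((y, cy), (z, cz)) => .fork y cy z cz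
  left_inv x := by cases x <;> rfl
  right_inv x := by rcases x with _ | ⟨⟨_, _⟩, ⟨_, _⟩⟩ <;> rfl

theorem card_state [Fintype Q] :
    Fintype.card (State Q × Bool) =
      2 * ((2 * Fintype.card Q ^ 2 + Fintype.card Q) +
        4 * (2 * Fintype.card Q ^ 2 + Fintype.card Q) ^ 2) := by
  simp only [Fintype.card_prod, Fintype.card_congr State.equivSum, Fintype.card_sum,
    Fintype.card_congr Claim.equivSum, Fintype.card_bool]
  ring

end TwoWayToOneWay

theorem two_mul_three_pow_le {k : ℕ} (hk : 2 ≤ k) (n : ℕ) : 2 * 3 ^ n ≤ 3 * k ^ (k * n) :=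
  calc 2 * 3 ^ n ≤ 3 * (2 ^ 2) ^ n := by gcongr <;> norm_num
    _ = 3 * 2 ^ (2 * n) := by rw [pow_mul]
    _ ≤ 3 * k ^ (2 * n) := by gcongr
    _ ≤ 3 * k ^ (k * n) := by gcongr; omega

/-- For every 2DA `M` with state set `Q` there is an ADA^ε `B` over the
same alphabet with a number of states polynomial in `|Q|`, accepting the same language,
such that `cost_B w ≤ cost_M w ≤ 3·k^(k·cost_B w)` for every word `w`, where
`k = |Q|² + |Q|`.  Consequently, `M` is limited iff `B` is limited. -/
theorem twoWayDA_to_adaEps :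
    ∃ p : Polynomial ℕ,
      ∀ (A Q : Type) [Fintype A] [Fintype Q] (M : A2DA A Q),
        M.EpsFree → M.NonAlternating →
        ∃ (Q' : Type) (_ : Fintype Q') (B : A2DA A Q'),
          B.OneWay ∧
          Fintype.card Q' ≤ p.eval (Fintype.card Q) ∧
          B.accepts = M.accepts ∧
          (∀ w : List A,
            B.cost w ≤ M.cost w ∧
            M.cost w ≤ 3 * (Fintype.card Q ^ 2 + Fintype.card Q) ^
              ((Fintype.card Q ^ 2 + Fintype.card Q) * B.cost w)) ∧
          (M.Limited ↔ B.Limited) := by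
  open Polynomial in
  refine ⟨2 * ((2 * X ^ 2 + X) + 4 * (2 * X ^ 2 + X) ^ 2), fun A Q _ _ M hE hNA => ?_⟩
  set k := Fintype.card Q ^ 2 + Fintype.card Q
  have hk : 2 ≤ k := by
    have hQ : 0 < Fintype.card Q := Fintype.card_pos_iff.2 ⟨M.init⟩
    have := Nat.one_le_pow 2 _ hQ
    omega
  have hle := TwoWayToOneWay.cost_automaton_le hE hNA
  have hge (w : List A) : M.cost w ≤ 3 * k ^ (k * (TwoWayToOneWay.automaton M).cost w) :=
    (TwoWayToOneWay.cost_le_automaton hE hNA w).trans (two_mul_three_pow_le hk _)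
  refine ⟨_, inferInstance, TwoWayToOneWay.automaton M, TwoWayToOneWay.automaton_oneWay M,
    by rw [TwoWayToOneWay.card_state]; simp, TwoWayToOneWay.accepts_automaton hE hNA,
    fun w => ⟨hle w, hge w⟩, fun ⟨N, hN⟩ => ⟨N, fun w => (hle w).trans (hN w)⟩,
    fun ⟨N, hN⟩ => ⟨3 * k ^ (k * N), fun w => (hge w).trans ?_⟩⟩
  exact Nat.mul_le_mul_left 3 (Nat.pow_le_pow_right (by omega) (Nat.mul_le_mul_left k (hN w)))

end DistAut
end

section
/- For every n ≥ 1 there exists a 2^n-tiling problem T_n, with tile set and constraint relations of size polynomial in n, such that every solution of T_n uses exactly 2^{2^n} rows (in particular T_n has finitely many solutions) and T_n has at least 2^{2^{2^n}} distinct solutions. -/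
namespace RPQ

/-- A `2^n`-tiling problem: a width parameter `n`, a finite set of tiles `Δ`, horizontal
and vertical constraint relations, and starting and final tiles. -/
structure TilingProblem (Δ : Type) where
  n : ℕ
  H : Δ → Δ → Prop
  V : Δ → Δ → Prop
  tS : Δ
  tF : Δ

/-- A solution of a `2^n`-tiling problem: a consistent assignment of tiles to a rectangle
with `2^n` columns and `k ≥ 1` rows. -/
structure TSolution {Δ : Type} (T : TilingProblem Δ) where
  k : ℕ
  kpos : 0 < k
  f : Fin (2 ^ T.n) → Fin k → Δ
  hfirst : f ⟨0, Nat.two_pow_pos T.n⟩ ⟨0, kpos⟩ = T.tS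
  hlast : f ⟨2 ^ T.n - 1, Nat.sub_lt (Nat.two_pow_pos T.n) Nat.one_pos⟩
      ⟨k - 1, Nat.sub_lt kpos Nat.one_pos⟩ = T.tF
  hH : ∀ (i : ℕ) (hi : i + 1 < 2 ^ T.n) (j : Fin k),
      T.H (f ⟨i, Nat.lt_of_succ_lt hi⟩ j) (f ⟨i + 1, hi⟩ j)
  hV : ∀ (i : Fin (2 ^ T.n)) (j : ℕ) (hj : j + 1 < k),
      T.V (f i ⟨j, Nat.lt_of_succ_lt hj⟩) (f i ⟨j + 1, hj⟩)

/-!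
Tile the `2^n × k` rectangle by a binary counter: row `j` holds the `2^n` bits of `j`, and each
tile also carries the carry into its position when `j` is incremented. The vertical constraint
forces row `j + 1` to be row `j` plus one, the start tile forces row `0` to be zero, the final
tile forces the last row to be all ones, and the right border forbids an overflow, so
`k = 2^(2^n)`. An extra unconstrained bit per tile gives one solution for every assignment of a
bit to each row.
-/

end RPQ

theorem eq_of_forall_succ_eq {α : Type*} {f : ℕ → α} {m : ℕ}
    (h : ∀ i, i + 1 < m → f i = f (i + 1)) {i j : ℕ} (hi : i < m) (hj : j < m) : f i = f j := by
  suffices key : ∀ i < m, f i = f 0 from (key i hi).trans (key j hj).symm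
  intro i hi
  induction i with
  | zero => rfl
  | succ i ih => exact (h i hi).symm.trans (ih (by omega))

namespace Nat

theorem two_pow_succ_dvd_add_one_iff {j i : ℕ} :
    2 ^ (i + 1) ∣ j + 1 ↔ j.testBit i ∧ 2 ^ i ∣ j + 1 := by
  by_cases h : 2 ^ i ∣ j + 1
  · have hdiv : (j + 1) / 2 ^ i = j / 2 ^ i + 1 := by simp [Nat.succ_div, h]
    rw [pow_succ, ← Nat.dvd_div_iff_mul_dvd h, hdiv, testBit_eq_decide_div_mod_eq]
    simp only [h, and_true, decide_eq_true_eq]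
    omega
  · exact ⟨fun h' => absurd ((pow_dvd_pow 2 i.le_succ).trans h') h, fun h' => absurd h'.2 h⟩

theorem testBit_add_one_eq_xor {j i : ℕ} :
    (j + 1).testBit i = (j.testBit i ^^ decide (2 ^ i ∣ j + 1)) := by
  rw [testBit_eq_decide_div_mod_eq, testBit_eq_decide_div_mod_eq, Nat.succ_div]
  by_cases h : 2 ^ i ∣ j + 1 <;> simp only [h, if_true, if_false] <;> grind

theorem eq_two_pow_sub_one_of_testBit {x w : ℕ} (hx : x < 2 ^ w)
    (h : ∀ i < w, x.testBit i) : x = 2 ^ w - 1 := by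
  refine eq_of_testBit_eq fun i => ?_
  rw [testBit_two_pow_sub_one]
  by_cases hi : i < w
  · simp [hi, h i hi]
  · simpa [hi] using testBit_lt_two_pow (hx.trans_le (Nat.pow_le_pow_right two_pos (by omega)))

end Nat

namespace RPQ

namespace TSolution

variable {Δ : Type} {T : TilingProblem Δ} (s : TSolution T)

def tile (i j : ℕ) : Δ :=
  if h : i < 2 ^ T.n ∧ j < s.k then s.f ⟨i, h.1⟩ ⟨j, h.2⟩ else T.tS

theorem tile_eq (i : Fin (2 ^ T.n)) (j : Fin s.k) : s.tile i j = s.f i j := by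
  simp [tile]

theorem tile_zero_zero : s.tile 0 0 = T.tS := by
  rw [tile, dif_pos ⟨Nat.two_pow_pos _, s.kpos⟩, s.hfirst]

theorem tile_last : s.tile (2 ^ T.n - 1) (s.k - 1) = T.tF := by
  rw [tile, dif_pos ⟨Nat.sub_one_lt_of_lt (Nat.two_pow_pos _), Nat.sub_one_lt_of_lt s.kpos⟩,
    s.hlast]

variable {s} {i j : ℕ}

theorem H_tile (hi : i + 1 < 2 ^ T.n) (hj : j < s.k) : T.H (s.tile i j) (s.tile (i + 1) j) := by
  simpa [tile, hi, hj, Nat.lt_of_succ_lt hi] using s.hH i hi ⟨j, hj⟩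

theorem V_tile (hi : i < 2 ^ T.n) (hj : j + 1 < s.k) : T.V (s.tile i j) (s.tile i (j + 1)) := by
  simpa [tile, hi, hj, Nat.lt_of_succ_lt hj] using s.hV ⟨i, hi⟩ j hj

theorem finite_of_forall_k_eq [Finite Δ] {K : ℕ} (hK : ∀ s : TSolution T, s.k = K) :
    Finite (TSolution T) := by
  refine Finite.of_injective (fun s : TSolution T => fun (i : Fin (2 ^ T.n)) (j : Fin K) =>
    s.tile i j) fun s₁ s₂ he => ?_
  have hk₁ := hK s₁
  have hk₂ := hK s₂
  obtain ⟨k₁, _, f₁, _, _, _, _⟩ := s₁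
  obtain ⟨k₂, _, f₂, _, _, _, _⟩ := s₂
  subst hk₂
  cases hk₁
  obtain rfl : f₁ = f₂ := funext₂ fun i j => by simpa only [tile_eq] using congrFun₂ he i j
  rfl

end TSolution

/-- A cell of the counter: `lft`/`rt` mark the first/last column, `fst`/`lst` the first/last row,
`bit` is the bit of the row's counter value at this column, `cin` the carry into this position
when the counter is incremented, and `free` is unconstrained. -/
structure Tile where
  lft : Bool
  rt : Bool
  fst : Bool
  lst : Bool
  bit : Bool
  cin : Bool
  free : Bool

def Tile.equivProd : Tile ≃ Bool × Bool × Bool × Bool × Bool × Bool × Bool where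
  toFun t := (t.lft, t.rt, t.fst, t.lst, t.bit, t.cin, t.free)
  invFun t := ⟨t.1, t.2.1, t.2.2.1, t.2.2.2.1, t.2.2.2.2.1, t.2.2.2.2.2.1, t.2.2.2.2.2.2⟩

instance : Fintype Tile := Fintype.ofEquiv _ Tile.equivProd.symm

def Tile.RowFlagsOk (t : Tile) : Prop :=
  (t.fst → t.bit = false) ∧ (t.lst → t.bit = true)

def counterH (a b : Tile) : Prop :=
  a.fst = b.fst ∧ a.lst = b.lst ∧ b.cin = (a.bit && a.cin) ∧ a.RowFlagsOk ∧ b.RowFlagsOk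

def counterV (a b : Tile) : Prop :=
  a.lft = b.lft ∧ a.rt = b.rt ∧ b.bit = (a.bit ^^ a.cin) ∧ (b.lft → b.cin) ∧
    (a.rt → (a.bit && a.cin) = false)

def counterTile (W i j : ℕ) (free : Bool) : Tile where
  lft := decide (i = 0)
  rt := decide (i = W - 1)
  fst := decide (j = 0)
  lst := decide (j = 2 ^ W - 1)
  bit := j.testBit i
  cin := decide (2 ^ i ∣ j + 1)
  free := free

def counterProblem (n : ℕ) : TilingProblem Tile where
  n := n
  H := counterH
  V := counterV
  tS := counterTile (2 ^ n) 0 0 false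
  tF := counterTile (2 ^ n) (2 ^ n - 1) (2 ^ 2 ^ n - 1) false

namespace counterProblem

variable {n : ℕ} (s : TSolution (counterProblem n)) {i j : ℕ}

theorem tile_zero_zero_eq_counterTile : s.tile 0 0 = counterTile (2 ^ n) 0 0 false :=
  s.tile_zero_zero

theorem tile_last_eq_counterTile :
    s.tile (2 ^ n - 1) (s.k - 1) = counterTile (2 ^ n) (2 ^ n - 1) (2 ^ 2 ^ n - 1) false :=
  s.tile_last

theorem fst_tile_zero (hi : i < 2 ^ n) : (s.tile i 0).fst := by
  have hrow := eq_of_forall_succ_eq (f := fun i => (s.tile i 0).fst)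
    (fun i hi => (s.H_tile hi s.kpos).1) hi (Nat.two_pow_pos n)
  simp [hrow, tile_zero_zero_eq_counterTile, counterTile]

theorem lst_tile_last (hi : i < 2 ^ n) : (s.tile i (s.k - 1)).lst := by
  have hrow := eq_of_forall_succ_eq (f := fun i => (s.tile i (s.k - 1)).lst) (j := 2 ^ n - 1)
    (fun i hi => (s.H_tile hi (Nat.sub_one_lt_of_lt s.kpos)).2.1) hi
    (Nat.sub_one_lt_of_lt (Nat.two_pow_pos n))
  simp [hrow, tile_last_eq_counterTile, counterTile]

theorem lft_tile_zero (hj : j < s.k) : (s.tile 0 j).lft := by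
  have hcol := eq_of_forall_succ_eq (f := fun j => (s.tile 0 j).lft)
    (fun j hj => (s.V_tile (Nat.two_pow_pos n) hj).1) hj s.kpos
  simp [hcol, tile_zero_zero_eq_counterTile, counterTile]

theorem rt_tile_last (hj : j < s.k) : (s.tile (2 ^ n - 1) j).rt := by
  have hcol := eq_of_forall_succ_eq (f := fun j => (s.tile (2 ^ n - 1) j).rt)
    (fun j hj => (s.V_tile (Nat.sub_one_lt_of_lt (Nat.two_pow_pos n)) hj).2.1) hj
    (Nat.sub_one_lt_of_lt s.kpos)
  simp [hcol, tile_last_eq_counterTile, counterTile]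

theorem rowFlagsOk_tile (hn : 1 ≤ n) (hi : i < 2 ^ n) (hj : j < s.k) :
    (s.tile i j).RowFlagsOk := by
  have hW : 2 ≤ 2 ^ n := Nat.le_self_pow (by omega) 2
  rcases Nat.lt_or_ge (i + 1) (2 ^ n) with hi' | hi'
  · exact (s.H_tile hi' hj).2.2.2.1
  · obtain rfl : i = 2 ^ n - 2 + 1 := by omega
    exact (s.H_tile (show 2 ^ n - 2 + 1 < 2 ^ n by omega) hj).2.2.2.2

theorem cin_tile_zero (hj : j < s.k) : (s.tile 0 j).cin := by
  cases j with
  | zero => simp [tile_zero_zero_eq_counterTile, counterTile]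
  | succ j => exact (s.V_tile (Nat.two_pow_pos n) hj).2.2.2.1 (lft_tile_zero s hj)

theorem cin_tile_of_bit_tile (hj : j < s.k) (hbit : ∀ i < 2 ^ n, (s.tile i j).bit = j.testBit i)
    (hi : i < 2 ^ n) : (s.tile i j).cin = decide (2 ^ i ∣ j + 1) := by
  induction i with
  | zero => simp [cin_tile_zero s hj]
  | succ i ih =>
    rw [(s.H_tile hi hj).2.2.1, ih (by omega), hbit i (by omega)]
    simp [Nat.two_pow_succ_dvd_add_one_iff]

theorem bit_tile (hn : 1 ≤ n) (hj : j < s.k) (hi : i < 2 ^ n) :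
    (s.tile i j).bit = j.testBit i := by
  induction j generalizing i with
  | zero => simpa using (rowFlagsOk_tile s hn hi hj).1 (fst_tile_zero s hi)
  | succ j ih =>
    rw [(s.V_tile hi hj).2.2.1, ih (by omega) hi,
      cin_tile_of_bit_tile s (by omega) (fun i hi => ih (by omega) hi) hi,
      Nat.testBit_add_one_eq_xor]

theorem not_two_pow_dvd (hn : 1 ≤ n) (hj : j + 1 < s.k) : ¬ 2 ^ 2 ^ n ∣ j + 1 := by
  have hW := Nat.one_le_two_pow (n := n)
  have hlast : 2 ^ n - 1 < 2 ^ n := by omega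
  have hover := (s.V_tile hlast hj).2.2.2.2 (rt_tile_last s (by omega))
  rw [bit_tile s hn (by omega) hlast, cin_tile_of_bit_tile s (by omega)
    (fun i hi => bit_tile s hn (by omega) hi) hlast] at hover
  have hcarry := Nat.two_pow_succ_dvd_add_one_iff (j := j) (i := 2 ^ n - 1)
  rw [Nat.sub_add_cancel hW] at hcarry
  simpa [hcarry] using hover

theorem k_eq (hn : 1 ≤ n) : s.k = 2 ^ 2 ^ n := by
  have hlast : s.k - 1 < s.k := Nat.sub_one_lt_of_lt s.kpos
  have hK := Nat.one_le_two_pow (n := 2 ^ n)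
  have hlt : s.k - 1 < 2 ^ 2 ^ n := by
    by_contra! h
    exact not_two_pow_dvd s hn (j := 2 ^ 2 ^ n - 1) (by omega) (by rw [Nat.sub_add_cancel hK])
  have hones : ∀ i < 2 ^ n, (s.k - 1).testBit i := fun i hi => by
    rw [← bit_tile s hn hlast hi]
    exact (rowFlagsOk_tile s hn hi hlast).2 (lst_tile_last s hi)
  have := Nat.eq_two_pow_sub_one_of_testBit hlt hones
  omega

end counterProblem

section counterTile

variable {W i j : ℕ}

theorem rowFlagsOk_counterTile (hi : i < W) (b : Bool) : (counterTile W i j b).RowFlagsOk := by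
  constructor <;> intro h <;> simp_all [counterTile]

theorem counterH_counterTile (hi : i + 1 < W) (b b' : Bool) :
    counterH (counterTile W i j b) (counterTile W (i + 1) j b') :=
  ⟨rfl, rfl, by simp [counterTile, Nat.two_pow_succ_dvd_add_one_iff],
    rowFlagsOk_counterTile (by omega) b, rowFlagsOk_counterTile hi b'⟩

theorem counterV_counterTile (hi : i < W) (hj : j + 1 < 2 ^ W) (b b' : Bool) :
    counterV (counterTile W i j b) (counterTile W i (j + 1) b') := by
  refine ⟨rfl, rfl, Nat.testBit_add_one_eq_xor, fun hlft => ?_, fun hrt => ?_⟩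
  · simp_all [counterTile]
  · obtain rfl : i = W - 1 := by simpa [counterTile] using hrt
    have hcarry := Nat.two_pow_succ_dvd_add_one_iff (j := j) (i := W - 1)
    rw [Nat.sub_add_cancel (by omega)] at hcarry
    have hno_overflow := Nat.not_dvd_of_pos_of_lt j.succ_pos hj
    rw [hcarry] at hno_overflow
    simpa [counterTile] using hno_overflow

end counterTile

/-- Row `j` stores its free bit in column `labelColumn j`, avoiding the two corners fixed by the
start and final tiles. -/
def labelColumn (j : ℕ) : ℕ := if j = 0 then 1 else 0

def counterSolution (n : ℕ) (hn : 1 ≤ n) (label : Fin (2 ^ 2 ^ n) → Bool) :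
    TSolution (counterProblem n) where
  k := 2 ^ 2 ^ n
  kpos := Nat.two_pow_pos _
  f i j := counterTile (2 ^ n) i j (decide (i.val = labelColumn j) && label j)
  hfirst := by simp [counterProblem, labelColumn]
  hlast := by
    have hW : 2 ≤ 2 ^ n := Nat.le_self_pow (by omega) 2
    have hK : 1 < 2 ^ 2 ^ n := Nat.one_lt_two_pow (by positivity)
    simp [counterProblem, labelColumn, show 2 ^ 2 ^ n - 1 ≠ 0 by omega,
      show 2 ^ n - 1 ≠ 0 by omega]
  hH i hi _ := counterH_counterTile hi _ _
  hV i _ hj := counterV_counterTile i.isLt hj _ _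

theorem counterSolution_injective (n : ℕ) (hn : 1 ≤ n) :
    Function.Injective (counterSolution n hn) := by
  intro label₁ label₂ he
  funext j
  have hcol : labelColumn j < 2 ^ (counterProblem n).n := by
    have hW : 2 ≤ 2 ^ n := Nat.le_self_pow (by omega) 2
    change labelColumn j < 2 ^ n
    unfold labelColumn
    split_ifs <;> omega
  simpa [TSolution.tile, counterSolution, counterTile, hcol] using
    congrArg (fun s => (s.tile (labelColumn j) j).free) he

/-- For every `n ≥ 1` there is a `2^n`-tiling problem `T_n`, with tile
set (and hence constraint relations) of size polynomial in `n`, such that every solution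
of `T_n` has exactly `2^(2^n)` rows (in particular `T_n` has finitely many solutions) and
`T_n` has at least `2^(2^(2^n))` distinct solutions. -/
theorem tiling_triple_exponentially_many_solutions :
    ∃ p : Polynomial ℕ,
      ∀ n : ℕ, 1 ≤ n →
        ∃ (Δ : Type) (_ : Fintype Δ) (T : TilingProblem Δ),
          T.n = n ∧
          Fintype.card Δ ≤ p.eval n ∧
          (∀ s : TSolution T, s.k = 2 ^ 2 ^ n) ∧
          Finite (TSolution T) ∧
          2 ^ 2 ^ 2 ^ n ≤ Nat.card (TSolution T) := by
  refine ⟨Polynomial.C (Fintype.card Tile), fun n hn => ?_⟩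
  have hk : ∀ s : TSolution (counterProblem n), s.k = 2 ^ 2 ^ n := fun s =>
    counterProblem.k_eq s hn
  have hfin : Finite (TSolution (counterProblem n)) := TSolution.finite_of_forall_k_eq hk
  refine ⟨Tile, inferInstance, counterProblem n, rfl, by simp, hk, hfin, ?_⟩
  calc 2 ^ 2 ^ 2 ^ n = Nat.card (Fin (2 ^ 2 ^ n) → Bool) := by simp
    _ ≤ Nat.card (TSolution (counterProblem n)) :=
      Nat.card_le_card_of_injective _ (counterSolution_injective n hn)

end RPQ
end
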